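/- Let δ be a generalized bicomplex partial b-metric on a nonempty set X with coefficient s ≥ 1. Then the function d_δ : X × X → ℂ₂⁺ defined by d_δ(σ,ϑ) = 2δ(σ,ϑ) − δ(σ,σ) − δ(ϑ,ϑ) is a bicomplex valued b-metric on X with coefficient s. -/

import Mathlib

/-!  Bicomplex numbers: `⟨z1, z2⟩` represents `z1 + i₂ z2` with `z1 z2 : ℂ`
     (the "inner" imaginary unit `i₁` is `Complex.I`). -/

noncomputable section

@[ext]
structure Bicomplex : Type where
  z1 : ℂ
  z2 : ℂ

namespace Bicomplex

instance : Zero Bicomplex := ⟨⟨0, 0⟩⟩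
instance : One Bicomplex := ⟨⟨1, 0⟩⟩
instance : Add Bicomplex := ⟨fun a b => ⟨a.z1 + b.z1, a.z2 + b.z2⟩⟩
instance : Neg Bicomplex := ⟨fun a => ⟨-a.z1, -a.z2⟩⟩
instance : Mul Bicomplex :=
  ⟨fun a b => ⟨a.z1 * b.z1 - a.z2 * b.z2, a.z1 * b.z2 + a.z2 * b.z1⟩⟩
instance : SMul ℝ Bicomplex := ⟨fun r a => ⟨r • a.z1, r • a.z2⟩⟩

@[simp] lemma zero_z1 : (0 : Bicomplex).z1 = 0 := rfl
@[simp] lemma zero_z2 : (0 : Bicomplex).z2 = 0 := rfl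
@[simp] lemma one_z1 : (1 : Bicomplex).z1 = 1 := rfl
@[simp] lemma one_z2 : (1 : Bicomplex).z2 = 0 := rfl
@[simp] lemma add_z1 (a b : Bicomplex) : (a + b).z1 = a.z1 + b.z1 := rfl
@[simp] lemma add_z2 (a b : Bicomplex) : (a + b).z2 = a.z2 + b.z2 := rfl
@[simp] lemma neg_z1 (a : Bicomplex) : (-a).z1 = -a.z1 := rfl
@[simp] lemma neg_z2 (a : Bicomplex) : (-a).z2 = -a.z2 := rfl
@[simp] lemma mul_z1 (a b : Bicomplex) : (a * b).z1 = a.z1 * b.z1 - a.z2 * b.z2 := rfl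
@[simp] lemma mul_z2 (a b : Bicomplex) : (a * b).z2 = a.z1 * b.z2 + a.z2 * b.z1 := rfl
@[simp] lemma smul_z1 (r : ℝ) (a : Bicomplex) : (r • a).z1 = r • a.z1 := rfl
@[simp] lemma smul_z2 (r : ℝ) (a : Bicomplex) : (r • a).z2 = r • a.z2 := rfl

instance : CommRing Bicomplex where
  add_assoc a b c := by ext <;> simp [add_assoc]
  zero_add a := by ext <;> simp
  add_zero a := by ext <;> simp
  add_comm a b := by ext <;> simp [add_comm]
  neg_add_cancel a := by ext <;> simp
  mul_comm a b := by ext <;> simp <;> ring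
  mul_assoc a b c := by ext <;> simp <;> ring
  one_mul a := by ext <;> simp
  mul_one a := by ext <;> simp
  left_distrib a b c := by ext <;> simp <;> ring
  right_distrib a b c := by ext <;> simp <;> ring
  zero_mul a := by ext <;> simp
  mul_zero a := by ext <;> simp
  nsmul := nsmulRec
  zsmul := zsmulRec

/-- The "outer" imaginary unit `i₂`. -/
def i2 : Bicomplex := ⟨0, 1⟩

/-- The "inner" imaginary unit `i₁`, viewed inside the bicomplex numbers. -/
def i1 : Bicomplex := ⟨Complex.I, 0⟩

/-- The embedding of the complex numbers into the bicomplex numbers. -/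
def ofComplex (z : ℂ) : Bicomplex := ⟨z, 0⟩

/-- The Euclidean norm on the bicomplex numbers:
    `‖φ₁ + i₂ φ₂‖ = (|φ₁|² + |φ₂|²)^{1/2}`. -/
def bnorm (a : Bicomplex) : ℝ :=
  Real.sqrt (‖a.z1‖ ^ 2 + ‖a.z2‖ ^ 2)

/-- The partial order on `ℂ` : `a ⪯ b` iff `Re a ≤ Re b` and `Im a ≤ Im b`. -/
def cle (a b : ℂ) : Prop := a.re ≤ b.re ∧ a.im ≤ b.im

/-- The partial order `⪯` on the bicomplex numbers: componentwise `cle`. -/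
def ble (a b : Bicomplex) : Prop := cle a.z1 b.z1 ∧ cle a.z2 b.z2

end Bicomplex

namespace Bicomplex

/-- A bicomplex partial b-metric on `X` with coefficient `s`. -/
def IsPartialBMetric {X : Type*} (s : ℝ) (δ : X → X → Bicomplex) : Prop :=
  (∀ σ ϑ, ble 0 (δ σ σ) ∧ ble (δ σ σ) (δ σ ϑ)) ∧
  (∀ σ ϑ, δ σ ϑ = δ ϑ σ) ∧
  (∀ σ ϑ, (δ σ σ = δ σ ϑ ∧ δ σ ϑ = δ ϑ ϑ) ↔ σ = ϑ) ∧
  (∀ σ ϑ φ, ble (δ σ ϑ) (s • (δ σ φ + δ φ ϑ) - δ φ φ))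

/-- A bicomplex partial metric on `X`. -/
def IsPartialMetric {X : Type*} (p : X → X → Bicomplex) : Prop :=
  (∀ σ ϑ, ble 0 (p σ σ) ∧ ble (p σ σ) (p σ ϑ)) ∧
  (∀ σ ϑ, p σ ϑ = p ϑ σ) ∧
  (∀ σ ϑ, (p σ σ = p σ ϑ ∧ p σ ϑ = p ϑ ϑ) ↔ σ = ϑ) ∧
  (∀ σ ϑ φ, ble (p σ ϑ) (p σ φ + p φ ϑ - p φ φ))

/-- A bicomplex valued b-metric on `X` with coefficient `s`. -/
def IsBMetric {X : Type*} (s : ℝ) (d : X → X → Bicomplex) : Prop :=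
  (∀ σ ϑ, ble 0 (d σ ϑ)) ∧
  (∀ σ ϑ, d σ ϑ = 0 ↔ σ = ϑ) ∧
  (∀ σ ϑ, d σ ϑ = d ϑ σ) ∧
  (∀ σ ϑ φ, ble (d σ ϑ) (s • (d σ φ + d φ ϑ)))

/-- A generalized bicomplex partial b-metric on `X` with coefficient `s`. -/
def IsGenPartialBMetric {X : Type*} (s : ℝ) (δ : X → X → Bicomplex) : Prop :=
  (∀ σ ϑ, ble 0 (δ σ σ) ∧ ble (δ σ σ) (δ σ ϑ)) ∧
  (∀ σ ϑ, δ σ ϑ = δ ϑ σ) ∧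
  (∀ σ ϑ, (δ σ σ = δ σ ϑ ∧ δ σ ϑ = δ ϑ ϑ) ↔ σ = ϑ) ∧
  (∀ σ ϑ φ, ble (δ σ ϑ)
    (s • (δ σ φ + δ φ ϑ - δ φ φ) + ((1 - s) / 2) • (δ σ σ + δ ϑ ϑ)))

end Bicomplex

namespace Bicomplex

@[simp] lemma sub_z1 (a b : Bicomplex) : (a - b).z1 = a.z1 - b.z1 := rfl
@[simp] lemma sub_z2 (a b : Bicomplex) : (a - b).z2 = a.z2 - b.z2 := rfl

lemma ble_iff {a b : Bicomplex} :
    ble a b ↔ a.z1.re ≤ b.z1.re ∧ a.z1.im ≤ b.z1.im ∧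
      a.z2.re ≤ b.z2.re ∧ a.z2.im ≤ b.z2.im := by
  simp only [ble, cle, and_assoc]

lemma ble.add {a b c d : Bicomplex} (hab : ble a b) (hcd : ble c d) :
    ble (a + c) (b + d) := by
  simp only [ble_iff, add_z1, add_z2, Complex.add_re, Complex.add_im] at *
  refine ⟨?_, ?_, ?_, ?_⟩ <;> linarith

lemma ble.sub_right {a b : Bicomplex} (h : ble a b) (c : Bicomplex) :
    ble (a - c) (b - c) := by
  simp only [ble_iff, sub_z1, sub_z2, Complex.sub_re, Complex.sub_im] at *
  refine ⟨?_, ?_, ?_, ?_⟩ <;> linarith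

lemma ble.smul {a b : Bicomplex} (h : ble a b) {r : ℝ} (hr : 0 ≤ r) :
    ble (r • a) (r • b) := by
  simp only [ble_iff, smul_z1, smul_z2, Complex.smul_re, Complex.smul_im, smul_eq_mul] at *
  obtain ⟨h₁, h₂, h₃, h₄⟩ := h
  exact ⟨mul_le_mul_of_nonneg_left h₁ hr, mul_le_mul_of_nonneg_left h₂ hr,
    mul_le_mul_of_nonneg_left h₃ hr, mul_le_mul_of_nonneg_left h₄ hr⟩

lemma zero_ble_sub_iff {a b : Bicomplex} : ble 0 (b - a) ↔ ble a b := by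
  simp only [ble_iff, sub_z1, sub_z2, zero_z1, zero_z2, Complex.sub_re, Complex.sub_im,
    Complex.zero_re, Complex.zero_im, sub_nonneg]

lemma add_eq_zero_iff_of_zero_ble {a b : Bicomplex} (ha : ble 0 a) (hb : ble 0 b) :
    a + b = 0 ↔ a = 0 ∧ b = 0 := by
  refine ⟨fun h => ?_, fun ⟨ha0, hb0⟩ => by rw [ha0, hb0, add_zero]⟩
  simp only [Bicomplex.ext_iff, Complex.ext_iff, add_z1, add_z2, zero_z1, zero_z2,
    Complex.add_re, Complex.add_im, Complex.zero_re, Complex.zero_im, ble_iff] at *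
  refine ⟨⟨⟨?_, ?_⟩, ?_, ?_⟩, ⟨?_, ?_⟩, ?_, ?_⟩ <;> linarith

section InducedMetric

variable {X : Type*} (δ : X → X → Bicomplex)

def inducedMetric (σ ϑ : X) : Bicomplex := (2 : ℝ) • δ σ ϑ - δ σ σ - δ ϑ ϑ

lemma inducedMetric_eq_add (σ ϑ : X) :
    inducedMetric δ σ ϑ = (δ σ ϑ - δ σ σ) + (δ σ ϑ - δ ϑ ϑ) := by
  ext <;> simp [inducedMetric, Complex.real_smul] <;> ring

lemma inducedMetric_self (σ : X) : inducedMetric δ σ σ = 0 := by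
  ext <;> simp [inducedMetric, Complex.real_smul] <;> ring

variable {δ}

lemma inducedMetric_comm (hsymm : ∀ σ ϑ, δ σ ϑ = δ ϑ σ) (σ ϑ : X) :
    inducedMetric δ σ ϑ = inducedMetric δ ϑ σ := by
  rw [inducedMetric, inducedMetric, hsymm σ ϑ, sub_right_comm]

lemma zero_ble_inducedMetric (hself : ∀ σ ϑ, ble (δ σ σ) (δ σ ϑ))
    (hsymm : ∀ σ ϑ, δ σ ϑ = δ ϑ σ) (σ ϑ : X) :
    ble 0 (inducedMetric δ σ ϑ) := by
  have h := (zero_ble_sub_iff.2 (hself σ ϑ)).add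
    (zero_ble_sub_iff.2 (hsymm σ ϑ ▸ hself ϑ σ))
  rwa [zero_add, ← inducedMetric_eq_add] at h

lemma inducedMetric_eq_zero_iff (hself : ∀ σ ϑ, ble (δ σ σ) (δ σ ϑ))
    (hsymm : ∀ σ ϑ, δ σ ϑ = δ ϑ σ)
    (hsep : ∀ σ ϑ, (δ σ σ = δ σ ϑ ∧ δ σ ϑ = δ ϑ ϑ) ↔ σ = ϑ) (σ ϑ : X) :
    inducedMetric δ σ ϑ = 0 ↔ σ = ϑ := by
  refine ⟨fun h => ?_, fun h => h ▸ inducedMetric_self δ σ⟩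
  rw [inducedMetric_eq_add, add_eq_zero_iff_of_zero_ble (zero_ble_sub_iff.2 (hself σ ϑ))
    (zero_ble_sub_iff.2 (hsymm σ ϑ ▸ hself ϑ σ)), sub_eq_zero, sub_eq_zero] at h
  exact (hsep σ ϑ).1 ⟨h.1.symm, h.2⟩

/-- Doubling the generalized triangle inequality and subtracting `δ σ σ + δ ϑ ϑ` turns its
right side into exactly `s • (inducedMetric δ σ φ + inducedMetric δ φ ϑ)`: the `(1 - s) / 2`
correction term is what makes this an identity. -/
lemma inducedMetric_ble_smul_add {s : ℝ} {σ ϑ φ : X}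
    (htri : ble (δ σ ϑ) (s • (δ σ φ + δ φ ϑ - δ φ φ) + ((1 - s) / 2) • (δ σ σ + δ ϑ ϑ))) :
    ble (inducedMetric δ σ ϑ) (s • (inducedMetric δ σ φ + inducedMetric δ φ ϑ)) := by
  have hdouble : (2 : ℝ) • (s • (δ σ φ + δ φ ϑ - δ φ φ) + ((1 - s) / 2) • (δ σ σ + δ ϑ ϑ))
      - δ σ σ - δ ϑ ϑ = s • (inducedMetric δ σ φ + inducedMetric δ φ ϑ) := by
    ext <;> simp [inducedMetric, Complex.real_smul] <;> ring
  rw [← hdouble]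
  exact ((htri.smul zero_le_two).sub_right _).sub_right _

end InducedMetric

theorem genPartialBMetric_induces_bMetric_general {X : Type*}
    (s : ℝ) (δ : X → X → Bicomplex) (hδ : IsGenPartialBMetric s δ) :
    IsBMetric s (fun σ ϑ => (2 : ℝ) • δ σ ϑ - δ σ σ - δ ϑ ϑ) := by
  obtain ⟨hself, hsymm, hsep, htri⟩ := hδ
  have hle : ∀ σ ϑ, ble (δ σ σ) (δ σ ϑ) := fun σ ϑ => (hself σ ϑ).2
  exact ⟨zero_ble_inducedMetric hle hsymm, inducedMetric_eq_zero_iff hle hsymm hsep,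
    inducedMetric_comm hsymm, fun σ ϑ φ => inducedMetric_ble_smul_add (htri σ ϑ φ)⟩

/-- if `δ` is a generalized bicomplex partial b-metric with
coefficient `s ≥ 1` on a nonempty set `X`, then
`d_δ(σ,ϑ) = 2δ(σ,ϑ) − δ(σ,σ) − δ(ϑ,ϑ)` is a bicomplex valued b-metric with
coefficient `s`. -/
theorem genPartialBMetric_induces_bMetric {X : Type*} [Nonempty X]
    (s : ℝ) (hs : 1 ≤ s) (δ : X → X → Bicomplex) (hδ : IsGenPartialBMetric s δ) :
    IsBMetric s (fun σ ϑ => (2 : ℝ) • δ σ ϑ - δ σ σ - δ ϑ ϑ) :=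
  genPartialBMetric_induces_bMetric_general s δ hδ

end Bicomplex
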